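/- arXiv:2209.01366 — 2 statements merged into one kernel-verified Lean document; each statement's English description precedes it below -/
import Mathlib

section
/- Let r > 1 and let F be a set of permutations of {1,…,n} with |F| ≥ 2. Then opt_weak,s,r(F) < r·ln(|F|). -/
/-- `GuessForce ok V m` means: in the mistake-bound game with weak (yes/no) reinforcement
where queries have type `Q`, guesses have type `A`, and `ok q g f` says that guess `g` is a
correct answer to query `q` when the hidden target is `f`, an (adaptive) adversary whose
answers must stay consistent with some member of the current version space `V` can force
every deterministic learner to be answered "no" at least `m` times.
At each step the adversary chooses a query `q` and, depending on the learner's guess `g`,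
either answers "no" (`c g = true`, one more mistake, continuing from the consistent
functions for which the guess is wrong) or answers "yes" (`c g = false`, continuing from the
consistent functions for which the guess is correct). -/
inductive GuessForce {α Q A : Type*} (ok : Q → A → α → Prop) : Set α → ℕ → Prop where
  | zero (V : Set α) : V.Nonempty → GuessForce ok V 0
  | step (V : Set α) (m : ℕ) (q : Q) (c : A → Bool)
      (hne : ∀ g : A, (if c g then {f ∈ V | ¬ ok q g f} else {f ∈ V | ok q g f}).Nonempty)
      (h : ∀ g : A, GuessForce ok (if c g then {f ∈ V | ¬ ok q g f} else {f ∈ V | ok q g f})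
        (if c g then m else m + 1)) :
      GuessForce ok V (m + 1)

/-- `opt_weak,s,r(F)`: the selection model. In each round the adversary chooses `r` (not
necessarily distinct) inputs `x 0, …, x (r-1)`, and the learner guesses which of them
maximizes the target permutation; weak reinforcement. -/
noncomputable def optSel (n r : ℕ) (F : Set (Equiv.Perm (Fin n))) : ℕ :=
  sSup {m | GuessForce
    (fun (x : Fin r → Fin n) (i₀ : Fin r) f => ∀ i, f (x i) ≤ f (x i₀)) F m}

/-! If the adversary can force `m` mistakes from the version space `V`, then
`k ^ m ≤ (k - 1) ^ m * |V|`, where `k` is the number of possible guesses: whichever query the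
adversary asks, some guess is right for at least `|V| / k` of the candidates, and the learner
plays such a guess, so a "no" shrinks the version space by a factor `(k - 1) / k` while a "yes"
never enlarges it. Taking logarithms and using `log (k / (k - 1)) > 1 / k` gives `m < k log |V|`. -/

theorem Set.exists_ncard_le_card_mul_ncard_sep {α A : Type*} [Fintype A] [Nonempty A]
    {V : Set α} (hV : V.Finite) {p : A → α → Prop} (hcov : ∀ f ∈ V, ∃ g, p g f) :
    ∃ g, V.ncard ≤ Fintype.card A * {f ∈ V | p g f}.ncard := by
  obtain ⟨g, hg⟩ := Finite.exists_max fun g => {f ∈ V | p g f}.ncard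
  refine ⟨g, ?_⟩
  have hcover : V ⊆ ⋃ g, {f ∈ V | p g f} := fun f hf =>
    let ⟨g, hgf⟩ := hcov f hf
    Set.mem_iUnion.2 ⟨g, hf, hgf⟩
  calc V.ncard ≤ (⋃ g, {f ∈ V | p g f}).ncard :=
        Set.ncard_le_ncard hcover (Set.finite_iUnion fun _ => hV.sep _)
    _ ≤ ∑ g, {f ∈ V | p g f}.ncard := Set.ncard_iUnion_le_of_fintype _
    _ ≤ Fintype.card A * {f ∈ V | p g f}.ncard := by
        simpa using Finset.sum_le_card_nsmul Finset.univ _ _ fun g' _ => hg g'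

theorem GuessForce.card_pow_le {α Q A : Type*} [Finite α] [Fintype A]
    {ok : Q → A → α → Prop} (hcov : ∀ q f, ∃ g, ok q g f) {V : Set α} {m : ℕ}
    (h : GuessForce ok V m) :
    Fintype.card A ^ m ≤ (Fintype.card A - 1) ^ m * V.ncard := by
  set k := Fintype.card A with hk
  induction h with
  | zero V hV =>
    simp only [pow_zero, one_mul]
    exact (Set.ncard_pos V.toFinite).2 hV
  | step V m q c _ _ ih =>
    cases isEmpty_or_nonempty A
    · simp [k, Fintype.card_eq_zero]
    obtain ⟨g, hg⟩ := Set.exists_ncard_le_card_mul_ncard_sep V.toFinite fun f _ => hcov q f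
    rw [← hk] at hg
    have hsplit : {f ∈ V | ok q g f}.ncard + {f ∈ V | ¬ ok q g f}.ncard = V.ncard :=
      Set.ncard_inter_add_ncard_sdiff_eq_ncard V {f | ok q g f}
    specialize ih g
    cases hc : c g
    · simp only [hc, Bool.false_eq_true, if_false] at ih
      calc k ^ (m + 1) ≤ (k - 1) ^ (m + 1) * {f ∈ V | ok q g f}.ncard := ih
        _ ≤ (k - 1) ^ (m + 1) * V.ncard :=
            Nat.mul_le_mul_left _ (Set.ncard_le_ncard (Set.sep_subset _ _))
    · simp only [hc, if_true] at ih
      have hshrink : k * {f ∈ V | ¬ ok q g f}.ncard ≤ (k - 1) * V.ncard := by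
        rw [Nat.sub_one_mul]
        apply Nat.le_sub_of_add_le
        rw [← hsplit, mul_add]
        omega
      calc k ^ (m + 1) = k * k ^ m := pow_succ' k m
        _ ≤ k * ((k - 1) ^ m * {f ∈ V | ¬ ok q g f}.ncard) := Nat.mul_le_mul_left k ih
        _ = (k - 1) ^ m * (k * {f ∈ V | ¬ ok q g f}.ncard) := by ring
        _ ≤ (k - 1) ^ m * ((k - 1) * V.ncard) := Nat.mul_le_mul_left _ hshrink
        _ = (k - 1) ^ (m + 1) * V.ncard := by ring

theorem Real.inv_lt_log_div_sub_one {r : ℝ} (hr : 1 < r) : r⁻¹ < Real.log (r / (r - 1)) := by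
  have hlt : Real.log ((r - 1) / r) < (r - 1) / r - 1 :=
    Real.log_lt_sub_one_of_pos (by apply div_pos <;> linarith)
      (by rw [Ne, div_eq_one_iff_eq (by positivity)]; linarith)
  rw [← inv_div, Real.log_inv]
  have : (r - 1) / r - 1 = -r⁻¹ := by field_simp; ring
  linarith

theorem lt_mul_log_of_pow_le_sub_one_pow_mul {r N : ℝ} {m : ℕ} (hr : 1 < r) (hN : 1 < N)
    (h : r ^ m ≤ (r - 1) ^ m * N) : (m : ℝ) < r * Real.log N := by
  have hr0 : 0 < r := by linarith
  have hlogN : 0 < Real.log N := Real.log_pos hN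
  rcases Nat.eq_zero_or_pos m with rfl | hm
  · simpa using mul_pos hr0 hlogN
  have hmlog : m * Real.log (r / (r - 1)) ≤ Real.log N := by
    rw [← Real.log_pow, div_pow]
    apply Real.log_le_log (by positivity)
    rwa [div_le_iff₀' (by apply pow_pos; linarith)]
  have hm' : m * r⁻¹ < m * Real.log (r / (r - 1)) :=
    mul_lt_mul_of_pos_left (Real.inv_lt_log_div_sub_one hr) (by exact_mod_cast hm)
  rw [← div_lt_iff₀' hr0]
  linarith [div_eq_mul_inv (m : ℝ) r]

/-- Let `r > 1` and let `F` be a set of permutations of `{1,…,n}` with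
`|F| ≥ 2`. Then `opt_weak,s,r(F) < r·ln |F|`. -/
theorem stmt17 (n r : ℕ) (hr : 1 < r) (F : Set (Equiv.Perm (Fin n))) (hF : 2 ≤ F.ncard) :
    (optSel n r F : ℝ) < (r : ℝ) * Real.log F.ncard := by
  have hcov : ∀ (x : Fin r → Fin n) (f : Equiv.Perm (Fin n)), ∃ i₀, ∀ i, f (x i) ≤ f (x i₀) :=
    have : Nonempty (Fin r) := ⟨⟨0, by omega⟩⟩
    fun x f => Finite.exists_max fun i => f (x i)
  have hF1 : (1 : ℝ) < F.ncard := by exact_mod_cast hF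
  have hforced : ∀ m ∈ {m | GuessForce
      (fun (x : Fin r → Fin n) (i₀ : Fin r) f => ∀ i, f (x i) ≤ f (x i₀)) F m},
      (m : ℝ) < r * Real.log F.ncard := fun m hm => by
    have hpow := hm.card_pow_le hcov
    rw [Fintype.card_fin] at hpow
    have hpow' := (Nat.cast_le (α := ℝ)).2 hpow
    push_cast [Nat.cast_sub hr.le] at hpow'
    exact lt_mul_log_of_pow_le_sub_one_pow_mul (by exact_mod_cast hr) hF1 hpow'
  have hFne : F.Nonempty := Set.nonempty_of_ncard_ne_zero (by omega)
  refine hforced _ (Nat.sSup_mem ⟨0, .zero F hFne⟩ ⟨⌈(r : ℝ) * Real.log F.ncard⌉₊, fun m hm => ?_⟩)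
  exact_mod_cast (hforced m hm).le.trans (Nat.le_ceil _)
end

section
/- For every ε > 0 there exists r₀ such that for every integer r ≥ r₀ there exists n₀ such that for all n ≥ n₀, opt_weak,s,r(S_n) ≥ (1−ε)·n·r·log_r(n)/2. -/
/-!
The adversary runs an `r`-way merge sort. To merge sorted lists it queries their current heads
and rejects every guess until a single head is left, which it then declares the maximum. The
learner decides the order in which the lists run out, but still suffers
`∑_{i<j} min (a i) (a j)` rejections while merging lists of lengths `a i`, that is
`(r choose 2) * a` for `r` lists of length `a`. Sorting `r ^ t` elements therefore forces
`t * (r choose 2) * r ^ (t - 1)` mistakes, and sorting `⌊n / r ^ t⌋` disjoint blocks with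
`t = log_r n - 1` forces about `n (r - 1)² (log_r n - 1) / (2r) ≥ (1 - ε) n r log_r n / 2`.
-/

namespace GuessForce

variable {α Q A : Type*} {ok : Q → A → α → Prop}

theorem nonempty [Nonempty A] {V : Set α} {m : ℕ} (h : GuessForce ok V m) : V.Nonempty := by
  induction h with
  | zero V hV => exact hV
  | step V m q c hne _ _ =>
    obtain ⟨f, hf⟩ := hne (Classical.arbitrary A)
    exact ⟨f, by split at hf <;> exact hf.1⟩

theorem mono {V W : Set α} {m : ℕ} (h : GuessForce ok V m) (hVW : V ⊆ W) :
    GuessForce ok W m := by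
  induction h generalizing W with
  | zero V hV => exact .zero W (hV.mono hVW)
  | step V m q c hne _ ih =>
    have hsub : ∀ g, (if c g then {f ∈ V | ¬ ok q g f} else {f ∈ V | ok q g f}) ⊆
        (if c g then {f ∈ W | ¬ ok q g f} else {f ∈ W | ok q g f}) := fun g => by
      split <;> exact fun f hf => ⟨hVW hf.1, hf.2⟩
    exact .step W m q c (fun g => (hne g).mono (hsub g)) (fun g => ih g (hsub g))

theorem of_le [Nonempty A] {V : Set α} {m m' : ℕ} (h : GuessForce ok V m) (hm : m' ≤ m) :
    GuessForce ok V m' := by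
  induction h generalizing m' with
  | zero V hV => exact Nat.le_zero.mp hm ▸ .zero V hV
  | step V m q c hne h ih =>
    obtain _ | m' := m'
    · exact .zero V (GuessForce.step V m q c hne h).nonempty
    · exact .step V m' q c hne fun g => ih g (by split <;> omega)

theorem succ_of_forall_wrong [Nonempty A] {V : Set α} {m : ℕ} (q : Q)
    (h : ∀ g, GuessForce ok {f ∈ V | ¬ ok q g f} m) : GuessForce ok V (m + 1) :=
  .step V m q (fun _ => true) (fun g => by simpa using (h g).nonempty) (fun g => by simpa using h g)

theorem lt_ncard [Finite α] [Nonempty A] (hok : ∀ q f, ∃ g, ok q g f) {V : Set α} {m : ℕ}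
    (h : GuessForce ok V m) : m < V.ncard := by
  induction h with
  | zero V hV => exact hV.ncard_pos
  | step V m q c hne h ih =>
    obtain ⟨f, hf⟩ := (GuessForce.step V m q c hne h).nonempty
    obtain ⟨g, hg⟩ := hok q f
    have := ih g
    by_cases hc : c g
    · simp only [hc, if_true] at this
      have hlt : {f ∈ V | ¬ ok q g f}.ncard < V.ncard :=
        Set.ncard_lt_ncard ⟨fun _ h => h.1, fun hV => (hV hf).2 hg⟩
      omega
    · simp only [hc, Bool.false_eq_true, if_false] at this
      have hle : {f ∈ V | ok q g f}.ncard ≤ V.ncard := Set.ncard_le_ncard fun _ h => h.1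
      omega

/-- The adversary repeats the query `q` and rejects every guess; a guess `g` rules out at most the
branch `W (π g)`, so `k < |T|` rejections fit before a single branch is left. -/
theorem biUnion [Nonempty A] {ι : Type*} [DecidableEq ι] {W : ι → Set α} {T : Finset ι}
    {m k : ℕ} (q : Q) (π : A → ι) (hk : k < T.card)
    (hwrong : ∀ g, ∀ j ∈ T, j ≠ π g → ∀ f ∈ W j, ¬ ok q g f)
    (hW : ∀ j ∈ T, GuessForce ok (W j) m) : GuessForce ok (⋃ j ∈ T, W j) (m + k) := by
  induction k generalizing T with
  | zero =>
    obtain ⟨j, hj⟩ := Finset.card_pos.mp hk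
    exact (hW j hj).mono (Set.subset_biUnion_of_mem hj)
  | succ k ih =>
    refine succ_of_forall_wrong q fun g => ?_
    have hsub : T.erase (π g) ⊆ T := Finset.erase_subset _ _
    have hk' : k < (T.erase (π g)).card := by
      have := Finset.pred_card_le_card_erase (s := T) (a := π g); omega
    refine (ih hk' (fun g' j hj => hwrong g' j (hsub hj)) (fun j hj => hW j (hsub hj))).mono ?_
    simp only [Set.iUnion_subset_iff]
    intro j hj f hf
    exact ⟨Set.mem_biUnion (hsub hj) hf, hwrong g j (hsub hj) (Finset.ne_of_mem_erase hj) f hf⟩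

end GuessForce

open Finset Function
open Equiv (Perm)

/-- `mergeCost a = ∑_{i < j} min (a i) (a j)`: the number of rejections forced while merging
sorted lists of lengths `a i`, one maximum at a time. -/
def mergeCost : {k : ℕ} → (Fin k → ℕ) → ℕ
  | 0, _ => 0
  | k + 1, a => ∑ i : Fin k, min (a 0) (a i.succ) + mergeCost (Fin.tail a)

theorem mergeCost_const (k c : ℕ) : mergeCost (fun _ : Fin k => c) = k.choose 2 * c := by
  induction k with
  | zero => simp [mergeCost]
  | succ k ih =>
    simp only [mergeCost, min_self, sum_const, card_univ, Fintype.card_fin, smul_eq_mul]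
    rw [show Fin.tail (fun _ : Fin (k + 1) => c) = fun _ => c from rfl, ih, Nat.choose_succ_succ,
      Nat.choose_one_right, add_mul]

theorem mergeCost_le_update {k : ℕ} (a : Fin k → ℕ) (j : Fin k) (hj : a j ≠ 0) :
    mergeCost a ≤ #{i | a i ≠ 0} - 1 + mergeCost (update a j (a j - 1)) := by
  -- only the pairs containing `j` change, each by at most one, and only if the partner is nonzero
  induction k with
  | zero => exact j.elim0
  | succ k ih =>
    have hcard : #{i | a i ≠ 0} = (if a 0 ≠ 0 then 1 else 0) + #{i : Fin k | a i.succ ≠ 0} :=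
      Fin.card_filter_univ_succ' _
    simp only [mergeCost, hcard]
    cases j using Fin.cases with
    | zero =>
      have hterm : ∀ i : Fin k,
          min (a 0) (a i.succ) ≤ min (a 0 - 1) (a i.succ) + if a i.succ ≠ 0 then 1 else 0 :=
        fun i => by simp only [min_def]; split_ifs <;> omega
      have := sum_le_sum fun i (_ : i ∈ univ) => hterm i
      rw [sum_add_distrib, sum_boole] at this
      simp only [Nat.cast_id, ne_eq] at this
      simp only [update_self, Fin.tail_update_zero, update_of_ne (Fin.succ_ne_zero _), hj, if_true,
        ne_eq, not_false_eq_true]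
      omega
    | succ j =>
      have hterm : ∀ i : Fin k, min (a 0) (a i.succ) ≤
          min (a 0) (update a j.succ (a j.succ - 1) i.succ) +
            if i = j ∧ a 0 ≠ 0 then 1 else 0 :=
        fun i => by
          by_cases hi : i = j
          · subst hi; simp only [update_self, true_and, min_def]; split_ifs <;> omega
          · simp [update_of_ne (Fin.succ_injective _ |>.ne hi)]
      have h1 := sum_le_sum fun i (_ : i ∈ univ) => hterm i
      rw [sum_add_distrib] at h1
      have h2 : mergeCost (Fin.tail a) ≤ #{i : Fin k | a i.succ ≠ 0} - 1 +
          mergeCost (update (Fin.tail a) j (a j.succ - 1)) := ih (Fin.tail a) j hj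
      simp only [update_of_ne (Fin.succ_ne_zero j).symm, Fin.tail_update_succ]
      simp only [ite_and, sum_ite_eq', mem_univ, if_true] at h1
      have hpos : 0 < #{i | a (Fin.succ i) ≠ 0} := card_pos.mpr ⟨j, by simpa using hj⟩
      split_ifs at h1 ⊢ <;> omega

theorem List.coe_flatten_ofFn {α : Type*} {k : ℕ} (ls : Fin k → List α) :
    ((List.ofFn ls).flatten : Multiset α) = ∑ i, (ls i : Multiset α) := by
  induction k with
  | zero => simp
  | succ k ih =>
    rw [List.ofFn_succ, List.flatten_cons, ← Multiset.coe_add, ih, Fin.sum_univ_succ]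

theorem List.flatten_ofFn_perm_cons_update {α : Type*} [DecidableEq α] {k : ℕ}
    (ls : Fin k → List α) {j : Fin k} {x : α} {l : List α} (hj : ls j = x :: l) :
    (List.ofFn ls).flatten.Perm (x :: (List.ofFn (update ls j l)).flatten) := by
  have hrest : ∑ i ∈ univ.erase j, ((update ls j l i : List α) : Multiset α) =
      ∑ i ∈ univ.erase j, ((ls i : List α) : Multiset α) :=
    Finset.sum_congr rfl fun i hi => by rw [update_of_ne (ne_of_mem_erase hi)]
  rw [← Multiset.coe_eq_coe, ← Multiset.cons_coe, List.coe_flatten_ofFn, List.coe_flatten_ofFn,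
    ← Finset.add_sum_erase _ _ (mem_univ j), ← Finset.add_sum_erase _ _ (mem_univ j), hrest,
    update_self, hj, ← Multiset.cons_coe, Multiset.cons_add]

theorem List.Perm.flatten_ofFn {α : Type*} {k : ℕ} {ls ls' : Fin k → List α}
    (h : ∀ i, (ls i).Perm (ls' i)) : (List.ofFn ls).flatten.Perm (List.ofFn ls').flatten := by
  rw [← Multiset.coe_eq_coe, List.coe_flatten_ofFn, List.coe_flatten_ofFn]
  exact Finset.sum_congr rfl fun i _ => Multiset.coe_eq_coe.mpr (h i)

namespace SelectionGame

variable {n r : ℕ}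

def descSet (L : List (Fin n)) : Set (Perm (Fin n)) := {f | L.Pairwise fun a b => f b < f a}

@[simp]
theorem mem_descSet {L : List (Fin n)} {f : Perm (Fin n)} :
    f ∈ descSet L ↔ L.Pairwise fun a b => f b < f a :=
  Iff.rfl

theorem descSet_nonempty {L : List (Fin n)} (hL : L.Nodup) : (descSet L).Nonempty := by
  let σ := Tuple.sort fun a => L.idxOf a
  refine ⟨σ.symm.trans Fin.revPerm, List.pairwise_iff_getElem.mpr fun i j hi hj hij => ?_⟩
  simp only [Equiv.trans_apply, Fin.revPerm_apply, Fin.rev_lt_rev]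
  by_contra! hle
  have := Tuple.monotone_sort (fun a => L.idxOf a) hle
  simp [σ, hL] at this
  omega

def SelCorrect (n r : ℕ) (x : Fin r → Fin n) (i₀ : Fin r) (f : Perm (Fin n)) : Prop :=
  ∀ i, f (x i) ≤ f (x i₀)

theorem le_optSel (hr : 0 < r) {m : ℕ} (h : GuessForce (SelCorrect n r) Set.univ m) :
    m ≤ optSel n r Set.univ := by
  have : Nonempty (Fin r) := ⟨⟨0, hr⟩⟩
  refine le_csSup ⟨_, fun m' hm' => (GuessForce.lt_ncard (fun x f => ?_) hm').le⟩ h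
  exact Finite.exists_max fun i => f (x i)

/-- `O` is the output of a merge so far, and `ls i` is what remains of the `i`-th sorted list. -/
def mergeSet (O : List (Fin n)) (ls : Fin r → List (Fin n)) : Set (Perm (Fin n)) :=
  descSet O ∩ ⋂ i, descSet (O ++ ls i)

theorem mergeSet_update_subset {O : List (Fin n)} {ls : Fin r → List (Fin n)} {j : Fin r}
    {x : Fin n} {l : List (Fin n)} (hj : ls j = x :: l) :
    mergeSet (O ++ [x]) (update ls j l) ⊆ mergeSet O ls := by
  rintro f ⟨hO, hls⟩
  simp only [Set.mem_iInter] at hls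
  refine ⟨hO.sublist (List.sublist_append_left O [x]), Set.mem_iInter.mpr fun i => ?_⟩
  have := hls i
  by_cases hij : i = j
  · subst hij
    simpa [hj] using this
  · rw [update_of_ne hij] at this
    exact List.Pairwise.sublist ((List.sublist_cons_self x (ls i)).append_left O)
      (by simpa using this)

theorem lt_of_mem_mergeSet_update {O : List (Fin n)} {ls : Fin r → List (Fin n)} {j : Fin r}
    {x : Fin n} {l : List (Fin n)} {f : Perm (Fin n)}
    (hf : f ∈ mergeSet (O ++ [x]) (update ls j l)) {i : Fin r} (hij : i ≠ j) {y : Fin n}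
    (hy : y ∈ ls i) : f y < f x := by
  have := Set.mem_iInter.mp hf.2 i
  rw [update_of_ne hij] at this
  exact (List.pairwise_append.mp this).2.2 x (by simp) y hy

theorem mergeSet_nil (ls : Fin r → List (Fin n)) : mergeSet [] ls = ⋂ i, descSet (ls i) := by
  ext; simp [mergeSet]

theorem mergeSet_of_forall_nil {O : List (Fin n)} {ls : Fin r → List (Fin n)}
    (h : ∀ i, ls i = []) : mergeSet O ls = descSet O := by
  simp [mergeSet, h]

theorem mergeCost_length_le_update_tail (ls : Fin r → List (Fin n)) {j : Fin r}
    (hj : ls j ≠ []) :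
    (mergeCost fun i => (ls i).length) ≤
      #{i | ls i ≠ []} - 1 + mergeCost fun i => (update ls j (ls j).tail i).length := by
  have hlen : (fun i => (update ls j (ls j).tail i).length) =
      update (fun i => (ls i).length) j ((ls j).length - 1) := by
    ext i; by_cases hij : i = j <;> simp [hij]
  have hcard : #{i | (ls i).length ≠ 0} = #{i | ls i ≠ []} := by simp
  rw [hlen, ← hcard]
  exact mergeCost_le_update _ j (by simpa using hj)

/-- One round of merging: the adversary queries the heads of the nonempty lists and rejects all
but one guess; the head left over becomes the next element of the output. -/
theorem guessForce_inter_mergeSet_of_cons {ls : Fin r → List (Fin n)} {O : List (Fin n)}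
    {V : Set (Perm (Fin n))} {m : ℕ} {j₀ : Fin r} (hj₀ : ls j₀ ≠ [])
    (hW : ∀ j x l, ls j = x :: l →
      GuessForce (SelCorrect n r) (V ∩ mergeSet (O ++ [x]) (update ls j l)) m) :
    GuessForce (SelCorrect n r) (V ∩ mergeSet O ls) (m + (#{i | ls i ≠ []} - 1)) := by
  have : Nonempty (Fin r) := ⟨j₀⟩
  set T : Finset (Fin r) := {i | ls i ≠ []}
  have hj₀T : j₀ ∈ T := mem_filter.mpr ⟨mem_univ _, hj₀⟩
  obtain ⟨d, -⟩ := List.exists_mem_of_ne_nil _ hj₀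
  let hd : Fin r → Fin n := fun j => (ls j).headD d
  have hcons : ∀ j ∈ T, ls j = hd j :: (ls j).tail := fun j hj => by
    obtain ⟨x, l, h⟩ := List.exists_cons_of_ne_nil (mem_filter.mp hj).2
    simp [hd, h]
  -- positions of empty lists repeat the head of `ls j₀`
  let π : Fin r → Fin r := fun g => if g ∈ T then g else j₀
  have hπ : ∀ g, π g ∈ T := fun g => by by_cases hg : g ∈ T <;> simp [π, hg, hj₀T]
  let W : Fin r → Set (Perm (Fin n)) := fun j =>
    V ∩ mergeSet (O ++ [hd j]) (update ls j (ls j).tail)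
  have hwrong :
      ∀ g, ∀ j ∈ T, j ≠ π g → ∀ f ∈ W j, ¬ SelCorrect n r (hd ∘ π) g f := by
    intro g j hj hjg f hf hmax
    have := hmax j
    simp only [comp_apply, π, if_pos hj] at this
    refine this.not_gt (lt_of_mem_mergeSet_update hf.2 hjg.symm ?_)
    rw [hcons _ (hπ g)]
    exact List.mem_cons_self
  have hk : T.card - 1 < T.card := Nat.sub_one_lt (card_pos.mpr ⟨j₀, hj₀T⟩).ne'
  refine (GuessForce.biUnion (hd ∘ π) π hk hwrong fun j hj => hW j _ _ (hcons j hj)).mono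
    (Set.iUnion₂_subset fun j hj => ?_)
  exact Set.inter_subset_inter_right _ (mergeSet_update_subset (hcons j hj))

theorem guessForce_inter_mergeSet (ls : Fin r → List (Fin n)) (O : List (Fin n))
    (V : Set (Perm (Fin n))) (m : ℕ) (hcont : ∀ L, L.Perm (List.ofFn ls).flatten →
      GuessForce (SelCorrect n r) (V ∩ descSet (O ++ L)) m) :
    GuessForce (SelCorrect n r) (V ∩ mergeSet O ls) (m + mergeCost fun i => (ls i).length) := by
  induction hN : (List.ofFn ls).flatten.length using Nat.strong_induction_on
    generalizing ls O with
  | _ N ih =>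
  by_cases hnil : ∀ i, ls i = []
  · have hcost : (mergeCost fun i => (ls i).length) = 0 := by
      simpa [hnil] using mergeCost_const r 0
    rw [hcost, add_zero, mergeSet_of_forall_nil hnil]
    simpa using hcont [] (by simp [hnil])
  obtain ⟨j₀, hj₀⟩ := not_forall.mp hnil
  have : Nonempty (Fin r) := ⟨j₀⟩
  set k := #{i | ls i ≠ []}
  refine (guessForce_inter_mergeSet_of_cons (m := m + (mergeCost fun i => (ls i).length) - (k - 1))
    hj₀ fun j x l hj => ?_).of_le (by omega)
  have hperm := List.flatten_ofFn_perm_cons_update ls hj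
  refine (ih _ (by rw [← hN, hperm.length_eq, List.length_cons]; omega) _ _
    (fun L hL => by simpa using hcont (x :: L) ((hL.cons _).trans hperm.symm)) rfl).of_le ?_
  have := mergeCost_length_le_update_tail ls (j := j) (by simp [hj])
  simp only [hj, List.tail_cons] at this
  omega

variable (r) in
/-- The adversary can force `c` rejections while committing to an order of the elements of `H`,
then continue from any consistent position. -/
def SortForces (H : List (Fin n)) (c : ℕ) : Prop :=
  ∀ (V : Set (Perm (Fin n))) (m : ℕ),
    (∀ L, L.Perm H → GuessForce (SelCorrect n r) (V ∩ descSet L) m) →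
      GuessForce (SelCorrect n r) V (m + c)

theorem sortForces_singleton (a : Fin n) : SortForces r [a] 0 := fun V m hcont => by
  simpa [descSet] using hcont [a] (List.Perm.refl _)

theorem SortForces.sequence {k c : ℕ} {H : Fin k → List (Fin n)}
    (hH : ∀ i, SortForces r (H i) c)
    (V : Set (Perm (Fin n))) (m : ℕ)
    (hcont : ∀ Ls : Fin k → List (Fin n), (∀ i, (Ls i).Perm (H i)) →
      GuessForce (SelCorrect n r) (V ∩ ⋂ i, descSet (Ls i)) m) :
    GuessForce (SelCorrect n r) V (m + k * c) := by
  induction k generalizing V with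
  | zero => simpa using hcont Fin.elim0 fun i => i.elim0
  | succ k ih =>
    rw [Nat.succ_mul, ← add_assoc]
    refine hH 0 V _ fun L₀ hL₀ => ih (fun i => hH i.succ) _ fun Ls hLs => ?_
    have hset : V ∩ descSet L₀ ∩ ⋂ i, descSet (Ls i) =
        V ∩ ⋂ i, descSet ((Fin.cons L₀ Ls : Fin (k + 1) → List (Fin n)) i) := by
      ext f
      simp [Fin.forall_fin_succ, and_assoc]
    exact hset ▸ hcont (Fin.cons L₀ Ls) (Fin.cases hL₀ hLs)

def chunk {α : Type*} {s : ℕ} (g : Fin (r * s) → α) (i : Fin r) (j : Fin s) : α :=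
  g ⟨i * s + j, by nlinarith [i.2, j.2]⟩

theorem ofFn_eq_flatten_chunk {α : Type*} {s : ℕ} (g : Fin (r * s) → α) :
    List.ofFn g = (List.ofFn fun i => List.ofFn (chunk g i)).flatten :=
  List.ofFn_mul g

theorem sortForces_of_chunks {s c : ℕ} (g : Fin (r * s) → Fin n)
    (hg : ∀ i, SortForces r (List.ofFn (chunk g i)) c) :
    SortForces r (List.ofFn g) (r * c + r.choose 2 * s) := fun V m hcont => by
  rw [Nat.add_comm (r * c), ← add_assoc]
  refine SortForces.sequence hg V _ fun Ls hLs => ?_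
  have hflat : (List.ofFn Ls).flatten.Perm (List.ofFn g) := by
    rw [ofFn_eq_flatten_chunk g]
    exact List.Perm.flatten_ofFn hLs
  have hmerge := guessForce_inter_mergeSet Ls [] V m fun L hL => by
    simpa using hcont L (hL.trans hflat)
  have hlen : (fun i => (Ls i).length) = fun _ => s := funext fun i => by simp [(hLs i).length_eq]
  rwa [hlen, mergeCost_const, mergeSet_nil] at hmerge

theorem sortForces_pow (t : ℕ) (g : Fin (r ^ t) → Fin n) :
    SortForces r (List.ofFn g) (t * r.choose 2 * r ^ (t - 1)) := by
  induction t with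
  | zero =>
    rw [List.ofFn_congr (pow_zero r) g]
    simpa using sortForces_singleton (r := r) (g (Fin.cast (pow_zero r).symm 0))
  | succ t ih =>
    rw [List.ofFn_congr (pow_succ' r t) g]
    convert sortForces_of_chunks _ fun i => ih _ using 1
    cases t <;> simp [pow_succ]; ring

theorem mul_le_optSel (hr : 0 < r) {t q : ℕ} (h : q * r ^ t ≤ n) :
    q * (t * r.choose 2 * r ^ (t - 1)) ≤ optSel n r Set.univ := by
  let blocks : Fin (q * r ^ t) → Fin n := Fin.castLE h
  suffices h : GuessForce (SelCorrect n r) Set.univ (0 + q * (t * r.choose 2 * r ^ (t - 1))) by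
    exact le_optSel hr (by simpa using h)
  refine SortForces.sequence (fun i => sortForces_pow t (chunk blocks i)) _ _
    fun Ls hLs => .zero _ ?_
  have hnodup : (List.ofFn Ls).flatten.Nodup := by
    rw [(List.Perm.flatten_ofFn hLs).nodup_iff, ← ofFn_eq_flatten_chunk]
    exact List.nodup_ofFn.mpr (Fin.castLE_injective h)
  obtain ⟨f, hf⟩ := descSet_nonempty hnodup
  refine ⟨f, trivial, Set.mem_iInter.mpr fun i => ?_⟩
  exact List.Pairwise.sublist (List.sublist_flatten_of_mem (List.mem_ofFn.mpr ⟨i, rfl⟩)) hf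

theorem mul_sq_div_le_optSel (hr : 0 < r) {u : ℕ} (hn : r ^ (u + 2) ≤ n) :
    (u + 1) * (r - 1) ^ 2 * n / (2 * r) ≤ (optSel n r Set.univ : ℝ) := by
  set q := n / r ^ (u + 1)
  have hopt := mul_le_optSel hr (Nat.div_mul_le_self n (r ^ (u + 1)))
  simp only [add_tsub_cancel_right] at hopt
  have hoptR : (q : ℝ) * ((u + 1) * (r * (r - 1) / 2) * r ^ u) ≤ optSel n r Set.univ := by
    rw [← Nat.cast_choose_two]; exact_mod_cast hopt
  have hqlt : (n : ℝ) < q * r ^ (u + 1) + r ^ (u + 1) := by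
    exact_mod_cast Nat.lt_div_mul_add (by positivity)
  have hle : (r : ℝ) * r ^ (u + 1) ≤ n := by rw [← pow_succ']; exact_mod_cast hn
  have hrR : (0 : ℝ) < r := by exact_mod_cast hr
  have hblocks : (r - 1) * n ≤ r * (q * r ^ (u + 1) : ℝ) := by nlinarith
  calc ((u : ℝ) + 1) * (r - 1) ^ 2 * n / (2 * r)
        = (u + 1) * (r - 1) * ((r - 1) * n) / (2 * r) := by ring
    _ ≤ (u + 1) * (r - 1) * (r * (q * r ^ (u + 1))) / (2 * r) := by
        have : (0 : ℝ) ≤ r - 1 := by rw [sub_nonneg]; exact_mod_cast hr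
        gcongr
    _ = (q : ℝ) * ((u + 1) * (r * (r - 1) / 2) * r ^ u) := by field_simp; ring
    _ ≤ optSel n r Set.univ := hoptR

theorem mul_logb_le_optSel (hr : 4 ≤ r) (hn : r ^ r ≤ n) :
    (1 - 4 / r) * n * r * Real.logb r n / 2 ≤ optSel n r Set.univ := by
  have hr1 : 1 < r := by omega
  obtain ⟨u, hu⟩ : ∃ u, Nat.log r n = u + 2 :=
    ⟨Nat.log r n - 2, by have := Nat.le_log_of_pow_le hr1 hn; omega⟩
  have hn0 : n ≠ 0 := (Nat.pos_of_ne_zero (pow_ne_zero r (by omega))).trans_le hn |>.ne'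
  have hur : (r : ℝ) ≤ u + 2 := by exact_mod_cast hu ▸ Nat.le_log_of_pow_le hr1 hn
  have hL : Real.logb r n ≤ u + 3 := by
    rw [Real.logb_le_iff_le_rpow (by exact_mod_cast hr1) (by positivity)]
    exact_mod_cast (by simpa [hu] using Nat.lt_pow_succ_log_self hr1 n : n < r ^ (u + 3)).le
  have hrR : (4 : ℝ) ≤ r := by exact_mod_cast hr
  have hpoly : (r : ℝ) * (r - 4) * (u + 3) ≤ (u + 1) * (r - 1) ^ 2 := by
    nlinarith [mul_nonneg (by linarith : (0 : ℝ) ≤ r) (by linarith : (0 : ℝ) ≤ u + 2 - r)]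
  calc (1 - 4 / r) * n * r * Real.logb r n / 2 ≤ (1 - 4 / r) * n * r * (u + 3) / 2 := by
        have h4 : (0 : ℝ) ≤ 1 - 4 / r := by rw [sub_nonneg, div_le_one (by linarith)]; exact hrR
        gcongr
    _ = r * (r - 4) * (u + 3) * n / (2 * r) := by field_simp
    _ ≤ (u + 1) * (r - 1) ^ 2 * n / (2 * r) := by gcongr
    _ ≤ optSel n r Set.univ := mul_sq_div_le_optSel (by omega) (hu ▸ Nat.pow_log_le_self r hn0)

end SelectionGame

/-- For every `ε > 0` there exists `r₀` such that for every integer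
`r ≥ r₀` there exists `n₀` such that for all `n ≥ n₀`,
`opt_weak,s,r(S_n) ≥ (1−ε)·n·r·log_r(n)/2`. -/
theorem stmt18 (ε : ℝ) (hε : 0 < ε) :
    ∃ r₀ : ℕ, ∀ r : ℕ, r₀ ≤ r → ∃ n₀ : ℕ, ∀ n : ℕ, n₀ ≤ n →
      (1 - ε) * n * r * Real.logb r n / 2
        ≤ (optSel n r (Set.univ : Set (Equiv.Perm (Fin n))) : ℝ) := by
  refine ⟨⌈4 / ε⌉₊ + 4, fun r hr => ⟨r ^ r, fun n hn => ?_⟩⟩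
  have hr4 : 4 ≤ r := by omega
  have hεr : 1 - ε ≤ 1 - 4 / r := by
    have : 4 / ε ≤ r :=
      (Nat.le_ceil _).trans (by exact_mod_cast (by omega : ⌈4 / ε⌉₊ ≤ r))
    rw [div_le_iff₀ hε] at this
    rw [sub_le_sub_iff_left, div_le_iff₀ (by positivity)]
    linarith
  have hlog : 0 ≤ Real.logb r n :=
    Real.logb_nonneg (by exact_mod_cast (by omega : 1 < r))
      (by exact_mod_cast (Nat.one_le_pow _ _ (by omega)).trans hn)
  calc (1 - ε) * n * r * Real.logb r n / 2 ≤ (1 - 4 / r) * n * r * Real.logb r n / 2 := by gcongr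
    _ ≤ optSel n r Set.univ := SelectionGame.mul_logb_le_optSel hr4 hn
end
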